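/- In the same weighted OV graph, if no pair a ∈ A, b ∈ B is orthogonal, then every red-blue min-distance is at most t+1: d(a,b) ≤ t+1 for all a ∈ A, b ∈ B, and d_min(a,i) ≤ t+1 for all a ∈ A, i ∈ I. -/
import Mathlib


/-- Weight of a shortest directed path from `a` to `b` in the digraph with
edge relation `E` and edge weights `w`; `⊤` if there is no path. -/
noncomputable def wdist {V : Type*} (E : V → V → Prop) (w : V → V → ENNReal) (a b : V) : ENNReal :=
  sInf {c : ENNReal | ∃ l : List V, List.Chain E a l ∧
    (a :: l).getLast (List.cons_ne_nil a l) = b ∧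
    c = (List.zip (a :: l) l).foldr (fun p acc => w p.1 p.2 + acc) 0}

/-- The weighted OV graph: red vertices A (type α), blue vertices B (type β)
and index vertices \`Fin d\`. Edges: a → i of weight t when a[i] = 1,
i → b of weight 1 when b[i] = 1, and i → a of weight t+1 for all i, a. -/
def wovE (d : ℕ) {α β : Type*} (vA : α → Fin d → Bool) (vB : β → Fin d → Bool) :
    (α ⊕ (β ⊕ Fin d)) → (α ⊕ (β ⊕ Fin d)) → Prop :=
  fun u v => match u, v with
  | Sum.inl a, Sum.inr (Sum.inr i) => vA a i = true
  | Sum.inr (Sum.inr i), Sum.inr (Sum.inl b) => vB b i = true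
  | Sum.inr (Sum.inr _), Sum.inl _ => True
  | _, _ => False

/-- The weights of the weighted OV graph. -/
noncomputable def wovW (t d : ℕ) {α β : Type*} :
    (α ⊕ (β ⊕ Fin d)) → (α ⊕ (β ⊕ Fin d)) → ENNReal :=
  fun u v => match u, v with
  | Sum.inl _, Sum.inr (Sum.inr _) => (t : ENNReal)
  | Sum.inr (Sum.inr _), Sum.inr (Sum.inl _) => 1
  | Sum.inr (Sum.inr _), Sum.inl _ => (t : ENNReal) + 1
  | _, _ => 0

/-- NO case: if no red-blue pair is orthogonal, then every red-blue
min-distance is at most t+1: d(a,b) ≤ t+1 for all a ∈ A, b ∈ B, and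
d_min(a,i) ≤ t+1 for all a ∈ A, i ∈ I. -/
theorem stmt17 {α β : Type*} (t d : ℕ) (ht : 1 ≤ t)
    (vA : α → Fin d → Bool) (vB : β → Fin d → Bool)
    (honeA : ∀ a : α, ∃ i : Fin d, vA a i = true)
    (hcommon : ∀ (a : α) (b : β), ∃ i : Fin d, vA a i = true ∧ vB b i = true) :
    (∀ (a : α) (b : β),
        wdist (wovE d vA vB) (wovW t d) (Sum.inl a) (Sum.inr (Sum.inl b))
          ≤ ((t + 1 : ℕ) : ENNReal)) ∧
      ∀ (a : α) (i : Fin d),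
        min (wdist (wovE d vA vB) (wovW t d) (Sum.inl a) (Sum.inr (Sum.inr i)))
            (wdist (wovE d vA vB) (wovW t d) (Sum.inr (Sum.inr i)) (Sum.inl a))
          ≤ ((t + 1 : ℕ) : ENNReal) := by
  constructor
  · intro a b
    obtain ⟨i, hai, hbi⟩ := hcommon a b
    refine sInf_le ⟨[Sum.inr (Sum.inr i), Sum.inr (Sum.inl b)], ?_, rfl, ?_⟩
    · exact List.Chain.cons hai (List.Chain.cons hbi List.Chain.nil)
    · simp [wovW]
  · intro a i
    refine min_le_of_right_le (sInf_le ⟨[Sum.inl a], ?_, rfl, ?_⟩)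
    · exact List.Chain.cons trivial List.Chain.nil
    · simp [wovW]
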